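/- Let f : ℝ^n → ℝ be continuously differentiable, attain its minimum value f* at some point, and satisfy the Polyak–Łojasiewicz (PL) inequality with parameter μ > 0: (1/2)‖∇f(z)‖₂² ≥ μ(f(z) − f*) for all z ∈ ℝ^n. Let p ∈ [0,1), α = (p+1)/2, a = (2μ)^α. Suppose x : [0,∞) → ℝ^n is differentiable and x′(t) = −∇f(x(t))/‖∇f(x(t))‖₂^{1−p} for all t ≥ 0 (the right-hand side interpreted as 0 when ∇f(x(t)) = 0). Then for every T ≥ 0, the static regret satisfies ∫₀^T (f(x(t)) − f*) dt ≤ V₀^{2−α}/(a(2−α)), where V₀ = f(x(0)) − f*. (Theorem 6, regret bound for the flow g_p.) -/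

import Mathlib

/-!
Let `V(t) = f(x(t)) - f*`. Along the flow `V' = -‖∇f(x)‖^(1+p)`, and the PL inequality
`‖∇f‖² ≥ 2μV` raised to the power `α = (p+1)/2` gives `V' ≤ -a V^α` with `a = (2μ)^α`. Then
`W = V^(2-α) / (a(2-α))` satisfies `W' = V^(1-α) V' / a ≤ -V`, so
`∫₀ᵀ V ≤ W(0) - W(T) ≤ W(0)`.
-/

open MeasureTheory Set Real

theorem HasGradientAt.comp_hasDerivAt {F : Type*} [NormedAddCommGroup F] [InnerProductSpace ℝ F]
    [CompleteSpace F] {f : F → ℝ} {g : F} {x : ℝ → F} {v : F} {t : ℝ}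
    (hf : HasGradientAt f g (x t)) (hx : HasDerivAt x v t) :
    HasDerivAt (fun s => f (x s)) (inner ℝ g v) t :=
  (hasGradientAt_iff_hasFDerivAt.mp hf).comp_hasDerivAt t hx

theorem rpow_inv_mul_sq {p r : ℝ} (hp : p ≠ -1) (hr : 0 ≤ r) :
    (r ^ (1 - p))⁻¹ * r ^ 2 = r ^ (1 + p) := by
  rcases hr.eq_or_lt with rfl | hr
  · have : 1 + p ≠ 0 := by contrapose! hp; linarith
    simp [zero_rpow this]
  · rw [← rpow_neg hr.le, ← rpow_natCast, ← rpow_add hr]; congr 1; push_cast; ring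

theorem inner_neg_rpow_inv_smul_self {F : Type*} [NormedAddCommGroup F] [InnerProductSpace ℝ F]
    {p : ℝ} (hp : p ≠ -1) (v : F) :
    inner ℝ v (-((‖v‖ ^ (1 - p))⁻¹ • v)) = -‖v‖ ^ (1 + p) := by
  rw [inner_neg_right, real_inner_smul_right, real_inner_self_eq_norm_sq,
    rpow_inv_mul_sq hp (norm_nonneg v)]

theorem hasDerivAt_comp_of_hasDerivAt_neg_rpow_inv_smul_gradient {F : Type*}
    [NormedAddCommGroup F] [InnerProductSpace ℝ F] [CompleteSpace F] {f : F → ℝ} {x : ℝ → F}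
    {p t : ℝ} (hp : p ≠ -1) (hf : DifferentiableAt ℝ f (x t))
    (hx : HasDerivAt x (-((‖gradient f (x t)‖ ^ (1 - p))⁻¹ • gradient f (x t))) t) :
    HasDerivAt (fun s => f (x s)) (-‖gradient f (x t)‖ ^ (1 + p)) t := by
  simpa only [inner_neg_rpow_inv_smul_self hp] using hf.hasGradientAt.comp_hasDerivAt hx

theorem rpow_mul_rpow_le_rpow_of_mul_le_sq {a v r q : ℝ} (ha : 0 ≤ a) (hv : 0 ≤ v) (hr : 0 ≤ r)
    (hq : 0 ≤ q) (h : a * v ≤ r ^ 2) : a ^ (q / 2) * v ^ (q / 2) ≤ r ^ q := by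
  have hsq : (r ^ 2) ^ (q / 2) = r ^ q := by
    rw [← rpow_natCast, ← rpow_mul hr]; congr 1; push_cast; ring
  rw [← mul_rpow ha hv, ← hsq]
  exact rpow_le_rpow (mul_nonneg ha hv) h (by positivity)

theorem integral_le_of_hasDerivAt_le_neg_mul_rpow {V V' : ℝ → ℝ} {a b c α : ℝ} (hab : a ≤ b)
    (hc : 0 < c) (hα : α ≤ 1) (hV : ∀ t ∈ Icc a b, 0 ≤ V t) (hcont : ContinuousOn V (Icc a b))
    (hderiv : ∀ t ∈ Ioo a b, HasDerivAt V (V' t) t)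
    (hle : ∀ t ∈ Ioo a b, V' t ≤ -(c * V t ^ α)) :
    ∫ t in a..b, V t ≤ V a ^ (2 - α) / (c * (2 - α)) := by
  have hβ : 1 ≤ 2 - α := by linarith
  have hcβ : 0 < c * (2 - α) := by positivity
  set W : ℝ → ℝ := fun t => V t ^ (2 - α) / (c * (2 - α))
  have hW : ∀ t ∈ Ioo a b,
      HasDerivAt W (V' t * (2 - α) * V t ^ (2 - α - 1) / (c * (2 - α))) t := fun t ht =>
    ((hderiv t ht).rpow_const (Or.inr hβ)).div_const _
  have hW_le : ∀ t ∈ Ioo a b, V' t * (2 - α) * V t ^ (2 - α - 1) / (c * (2 - α)) ≤ -V t := by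
    intro t ht
    have hVt := hV t (Ioo_subset_Icc_self ht)
    have hexp : 2 - α - 1 + α = 1 := by ring
    have hsplit : V t ^ (2 - α - 1) * V t ^ α = V t := by
      rw [← rpow_add' hVt (by rw [hexp]; norm_num), hexp, rpow_one]
    rw [div_le_iff₀ hcβ]
    calc V' t * (2 - α) * V t ^ (2 - α - 1)
        ≤ -(c * V t ^ α) * (2 - α) * V t ^ (2 - α - 1) := by
          have : 0 ≤ V t ^ (2 - α - 1) := rpow_nonneg hVt _
          gcongr
          exact hle t ht
      _ = -V t * (c * (2 - α)) := by linear_combination -(c * (2 - α)) * hsplit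
  have hWcont : ContinuousOn W (Icc a b) := fun t ht =>
    ((hcont t ht).rpow_const (Or.inr (by linarith))).div_const _
  have hdecrease : W b - W a ≤ ∫ t in a..b, -V t :=
    intervalIntegral.sub_le_integral_of_hasDeriv_right_of_le hab hWcont
      (fun t ht => (hW t ht).hasDerivWithinAt) (hcont.integrableOn_Icc.neg) hW_le
  have hWb : 0 ≤ W b := by have := hV b (right_mem_Icc.2 hab); positivity
  rw [intervalIntegral.integral_neg] at hdecrease
  linarith

theorem regret_bound_gp_flow_general
    {n : ℕ} (f : EuclideanSpace ℝ (Fin n) → ℝ) (fstar μ p : ℝ)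
    (hf : ContDiff ℝ 1 f)
    (hlb : ∀ z, fstar ≤ f z)
    (hμ : 0 < μ)
    (hPL : ∀ z, μ * (f z - fstar) ≤ (1/2) * ‖gradient f z‖ ^ 2)
    (hp : p ∈ Set.Ico (0:ℝ) 1)
    (x : ℝ → EuclideanSpace ℝ (Fin n))
    (hx : ∀ t ≥ (0:ℝ), HasDerivAt x
      (-((‖gradient f (x t)‖ ^ (1 - p))⁻¹ • gradient f (x t))) t) :
    ∀ T ≥ (0:ℝ),
      ∫ t in (0:ℝ)..T, (f (x t) - fstar) ≤
        (f (x 0) - fstar) ^ (2 - (p + 1)/2) / ((2 * μ) ^ ((p + 1)/2) * (2 - (p + 1)/2)) := by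
  intro T hT
  obtain ⟨hp0, hp1⟩ := hp
  set V : ℝ → ℝ := fun t => f (x t) - fstar
  have hV : ∀ t, 0 ≤ V t := fun t => sub_nonneg.2 (hlb _)
  have hderiv : ∀ t ≥ 0, HasDerivAt V (-‖gradient f (x t)‖ ^ (1 + p)) t := fun t ht =>
    (hasDerivAt_comp_of_hasDerivAt_neg_rpow_inv_smul_gradient (by linarith)
      (hf.differentiable one_ne_zero _) (hx t ht)).sub_const fstar
  have hdecay : ∀ t, (2 * μ) ^ ((p + 1) / 2) * V t ^ ((p + 1) / 2) ≤ ‖gradient f (x t)‖ ^ (1 + p) :=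
    fun t => by
      rw [add_comm p 1]
      exact rpow_mul_rpow_le_rpow_of_mul_le_sq (by positivity) (hV t) (norm_nonneg _)
        (by linarith) (by linarith [hPL (x t)])
  exact integral_le_of_hasDerivAt_le_neg_mul_rpow hT (by positivity) (by linarith)
    (fun t _ => hV t) (fun t ht => (hderiv t ht.1).continuousAt.continuousWithinAt)
    (fun t ht => hderiv t ht.1.le) (fun t _ => neg_le_neg (hdecay t))

/-- Theorem 6 (regret bound for the flow g_p): static regret bound for the
finite-time rescaled gradient flow. -/
theorem regret_bound_gp_flow
    {n : ℕ} (f : EuclideanSpace ℝ (Fin n) → ℝ) (fstar μ p : ℝ)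
    (hf : ContDiff ℝ 1 f)
    (hmin : ∃ z, f z = fstar) (hlb : ∀ z, fstar ≤ f z)
    (hμ : 0 < μ)
    (hPL : ∀ z, μ * (f z - fstar) ≤ (1/2) * ‖gradient f z‖ ^ 2)
    (hp : p ∈ Set.Ico (0:ℝ) 1)
    (x : ℝ → EuclideanSpace ℝ (Fin n))
    (hx : ∀ t ≥ (0:ℝ), HasDerivAt x
      (-((‖gradient f (x t)‖ ^ (1 - p))⁻¹ • gradient f (x t))) t) :
    ∀ T ≥ (0:ℝ),
      ∫ t in (0:ℝ)..T, (f (x t) - fstar) ≤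
        (f (x 0) - fstar) ^ (2 - (p + 1)/2) / ((2 * μ) ^ ((p + 1)/2) * (2 - (p + 1)/2)) :=
  regret_bound_gp_flow_general f fstar μ p hf hlb hμ hPL hp x hx
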